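/- Let ν be a finite Borel measure on B. Assume that for each l ∈ B and v ∈ L² there is a continuous Φ(·,l,v) : [0,1] → L² satisfying Φ(t,l,v) = v + l ∫₀ᵗ ḡ(Φ(s,l,v)) ds for all t ∈ [0,1], depending measurably on l, and define H(l,v) := Φ(1,l,v) − v − l ḡ(v) and b(v) := ∫_B H(l,v) ν(dl) (a Bochner integral in L²). Then there exists a constant C > 0, depending only on h, μ and ν, such that for all u, v ∈ L²: ‖b(u) − b(v)‖_{L²} ≤ C ‖u − v‖_{L²} and ‖b(v)‖_{L²} ≤ C (1 + ‖v‖_{L²}). -/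

import Mathlib

/-!
The map `ḡ` is the Nemytskii operator of `y ↦ y × h(x) + h(x)`, which is `‖h x‖`-Lipschitz, so
`ḡ` is Lipschitz on `L²` with constant `‖h‖_∞`. For `|l| < 1` the curve `t ↦ Φ(t,l,v)` solves
`φ' = l ḡ(φ)`, `φ(0) = v`, so Grönwall's inequality bounds `‖Φ(1,l,u) - Φ(1,l,v)‖` by
`e^{‖h‖_∞} ‖u - v‖` and `‖Φ(1,l,0)‖` by `e^{‖h‖_∞} ‖ḡ 0‖`, uniformly in `l`. Hence `H(l,·)` is
Lipschitz and `H(l,0)` is bounded uniformly in `l`, and integrating against the finite measure `ν`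
gives both estimates for `b`.
-/

open MeasureTheory
open scoped RealInnerProductSpace ENNReal

/-- The cross product on `ℝ³ = EuclideanSpace ℝ (Fin 3)`. -/
noncomputable def cross3 (a b : EuclideanSpace ℝ (Fin 3)) : EuclideanSpace ℝ (Fin 3) :=
  WithLp.toLp 2 ![a 1 * b 2 - a 2 * b 1, a 2 * b 0 - a 0 * b 2, a 0 * b 1 - a 1 * b 0]

open Set
open scoped NNReal Matrix Topology

lemma cross3_eq_crossProduct (a b : EuclideanSpace ℝ (Fin 3)) :
    cross3 a b = WithLp.toLp 2 (a.ofLp ⨯₃ b.ofLp) := rfl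

lemma norm_cross3_sq_add_inner_sq (a b : EuclideanSpace ℝ (Fin 3)) :
    ‖cross3 a b‖ ^ 2 + ⟪a, b⟫ ^ 2 = ‖a‖ ^ 2 * ‖b‖ ^ 2 := by
  simp only [← real_inner_self_eq_norm_sq, cross3_eq_crossProduct,
    EuclideanSpace.inner_eq_star_dotProduct, star_trivial, cross_dot_cross,
    dotProduct_comm b.ofLp a.ofLp]
  ring

lemma norm_cross3_le (a b : EuclideanSpace ℝ (Fin 3)) : ‖cross3 a b‖ ≤ ‖a‖ * ‖b‖ := by
  refine (sq_le_sq₀ (norm_nonneg _) (by positivity)).1 ?_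
  nlinarith [norm_cross3_sq_add_inner_sq a b, sq_nonneg ⟪a, b⟫]

lemma cross3_sub_left (a b c : EuclideanSpace ℝ (Fin 3)) :
    cross3 (a - b) c = cross3 a c - cross3 b c := by
  simp only [cross3_eq_crossProduct, WithLp.ofLp_sub, map_sub, LinearMap.sub_apply,
    WithLp.toLp_sub]

lemma lipschitzWith_cross3_add (c : EuclideanSpace ℝ (Fin 3)) :
    LipschitzWith ‖c‖₊ fun y => cross3 y c + c :=
  LipschitzWith.of_dist_le_mul fun y z => by
    rw [dist_eq_norm_sub, dist_eq_norm_sub, add_sub_add_right_eq_sub, ← cross3_sub_left, mul_comm]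
    exact norm_cross3_le _ _

theorem MeasureTheory.MemLp.ae_nnnorm_le_toNNReal {α E : Type*} [MeasurableSpace α]
    {μ : Measure α} [NormedAddCommGroup E] {f : α → E} (hf : MemLp f ∞ μ) :
    ∀ᵐ x ∂μ, ‖f x‖₊ ≤ (eLpNorm f ∞ μ).toNNReal := by
  simp_rw [← ENNReal.coe_le_coe, ENNReal.coe_toNNReal hf.2.ne, eLpNorm_exponent_top]
  exact ae_le_eLpNormEssSup

theorem MeasureTheory.Lp.lipschitzWith_of_ae_lipschitzWith {α E F : Type*} [MeasurableSpace α]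
    {μ : Measure α} {p : ℝ≥0∞} [Fact (1 ≤ p)] [NormedAddCommGroup E] [NormedAddCommGroup F]
    {K : ℝ≥0} {f : α → E → F} (hf : ∀ᵐ x ∂μ, LipschitzWith K (f x))
    {T : Lp E p μ → Lp F p μ} (hT : ∀ u, T u =ᵐ[μ] fun x => f x (u x)) : LipschitzWith K T :=
  LipschitzWith.of_dist_le_mul fun u v => by
    rw [dist_eq_norm_sub, dist_eq_norm_sub]
    refine Lp.norm_le_mul_norm_of_ae_le_mul ?_
    filter_upwards [hf, hT u, hT v, Lp.coeFn_sub (T u) (T v), Lp.coeFn_sub u v]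
      with x hfx hu hv hTuv huv
    rw [hTuv, huv, Pi.sub_apply, Pi.sub_apply, hu, hv, ← dist_eq_norm_sub, ← dist_eq_norm_sub]
    exact hfx.dist_le_mul _ _

theorem gronwallBound_le_exp_mul {δ K ε x : ℝ} (hε : 0 ≤ ε) (hK : 0 ≤ K) :
    gronwallBound δ K ε x ≤ Real.exp (K * x) * (δ + ε * x) := by
  rcases hK.eq_or_lt with rfl | hK
  · simp [gronwallBound_K0]
  rw [gronwallBound_of_K_ne_0 hK.ne']
  have hexp : Real.exp (K * x) * (1 - K * x) ≤ 1 := by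
    calc Real.exp (K * x) * (1 - K * x) ≤ Real.exp (K * x) * Real.exp (-(K * x)) :=
          mul_le_mul_of_nonneg_left (Real.one_sub_le_exp_neg _) (Real.exp_pos _).le
      _ = 1 := by rw [← Real.exp_add, add_neg_cancel, Real.exp_zero]
  have : ε / K * (Real.exp (K * x) - 1) ≤ Real.exp (K * x) * (ε * x) := by
    rw [div_mul_eq_mul_div, div_le_iff₀ hK]
    nlinarith [mul_le_mul_of_nonneg_left hexp hε]
  linarith

theorem LipschitzWith.norm_le_mul_norm_add {E F : Type*} [SeminormedAddCommGroup E]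
    [SeminormedAddCommGroup F] {K : ℝ≥0} {G : E → F} (hG : LipschitzWith K G) (x : E) :
    ‖G x‖ ≤ K * ‖x‖ + ‖G 0‖ := by
  have := hG.dist_le_mul x 0
  rw [dist_eq_norm_sub, dist_eq_norm_sub, sub_zero] at this
  linarith [norm_le_norm_sub_add (G x) (G 0)]

section IntegralEquation

variable {E : Type*} [NormedAddCommGroup E] [NormedSpace ℝ E]

structure SolvesIntegralEq (G : E → E) (l : ℝ) (v : E) (φ : ℝ → E) : Prop where
  continuousOn : ContinuousOn φ (Icc 0 1)
  eq : ∀ t ∈ Icc (0 : ℝ) 1, φ t = v + l • ∫ s in (0 : ℝ)..t, G (φ s)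

namespace SolvesIntegralEq

variable {G : E → E} {l : ℝ} {u v : E} {φ ψ : ℝ → E}

theorem apply_zero (hφ : SolvesIntegralEq G l v φ) : φ 0 = v := by
  simpa using hφ.eq 0 (left_mem_Icc.2 zero_le_one)

theorem hasDerivWithinAt [CompleteSpace E] (hφ : SolvesIntegralEq G l v φ)
    (hG : Continuous G) {t : ℝ} (ht : t ∈ Ico (0 : ℝ) 1) :
    HasDerivWithinAt φ (l • G (φ t)) (Ici t) t := by
  have hGφ : ContinuousOn (fun s => G (φ s)) (Icc 0 1) := hG.comp_continuousOn hφ.continuousOn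
  have hIcc : Icc (0 : ℝ) 1 ∈ 𝓝[>] t :=
    Filter.mem_of_superset (Ioc_mem_nhdsGT_of_mem ⟨le_rfl, ht.2⟩)
      fun r hr => ⟨ht.1.trans hr.1.le, hr.2⟩
  have hint : HasDerivWithinAt (fun r => ∫ s in (0 : ℝ)..r, G (φ s)) (G (φ t)) (Ici t) t := by
    refine intervalIntegral.integral_hasDerivWithinAt_right ?_
      ⟨_, hIcc, hGφ.aestronglyMeasurable measurableSet_Icc⟩
      ((hGφ t (Ico_subset_Icc_self ht)).mono_of_mem_nhdsWithin hIcc)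
    refine (hGφ.mono ?_).intervalIntegrable
    rw [uIcc_of_le ht.1]
    exact Icc_subset_Icc le_rfl ht.2.le
  refine (((hint.const_smul l).const_add v).mono Icc_subset_Ici_self |>.congr
    (fun r hr => hφ.eq r ⟨ht.1.trans hr.1, hr.2⟩) (hφ.eq t (Ico_subset_Icc_self ht)))
    |>.mono_of_mem_nhdsWithin (Icc_mem_nhdsGE_of_mem ⟨le_rfl, ht.2⟩)

theorem norm_apply_one_sub_le [CompleteSpace E] {K : ℝ≥0} (hG : LipschitzWith K G) (hl : |l| ≤ 1)
    (hφ : SolvesIntegralEq G l u φ) (hψ : SolvesIntegralEq G l v ψ) :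
    ‖φ 1 - ψ 1‖ ≤ Real.exp K * ‖u - v‖ := by
  have hbound : ∀ t ∈ Ico (0 : ℝ) 1,
      ‖l • G (φ t) - l • G (ψ t)‖ ≤ K * ‖φ t - ψ t‖ + 0 := fun t _ => by
    rw [← smul_sub, norm_smul, Real.norm_eq_abs, add_zero]
    exact (mul_le_of_le_one_left (norm_nonneg _) hl).trans (hG.norm_sub_le _ _)
  have := norm_le_gronwallBound_of_norm_deriv_right_le (f := fun t => φ t - ψ t)
    (hφ.continuousOn.sub hψ.continuousOn)
    (fun t ht => (hφ.hasDerivWithinAt hG.continuous ht).sub (hψ.hasDerivWithinAt hG.continuous ht))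
    (by rw [hφ.apply_zero, hψ.apply_zero]) hbound 1 (right_mem_Icc.2 zero_le_one)
  simpa [gronwallBound_ε0, mul_comm] using this

theorem norm_apply_one_le [CompleteSpace E] {K : ℝ≥0} (hG : LipschitzWith K G) (hl : |l| ≤ 1)
    (hφ : SolvesIntegralEq G l v φ) : ‖φ 1‖ ≤ Real.exp K * (‖v‖ + ‖G 0‖) := by
  have hbound : ∀ t ∈ Ico (0 : ℝ) 1, ‖l • G (φ t)‖ ≤ K * ‖φ t‖ + ‖G 0‖ := fun t _ => by
    rw [norm_smul, Real.norm_eq_abs]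
    exact (mul_le_of_le_one_left (norm_nonneg _) hl).trans (hG.norm_le_mul_norm_add _)
  have := norm_le_gronwallBound_of_norm_deriv_right_le hφ.continuousOn
    (fun t ht => hφ.hasDerivWithinAt hG.continuous ht) (by rw [hφ.apply_zero]) hbound 1
    (right_mem_Icc.2 zero_le_one)
  simpa using this.trans (gronwallBound_le_exp_mul (norm_nonneg _) K.2)

theorem norm_sub_sub_smul_sub_le [CompleteSpace E] {K : ℝ≥0} (hG : LipschitzWith K G)
    (hl : |l| ≤ 1) (hφ : SolvesIntegralEq G l u φ) (hψ : SolvesIntegralEq G l v ψ) :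
    ‖(φ 1 - u - l • G u) - (ψ 1 - v - l • G v)‖ ≤ (Real.exp K + 1 + K) * ‖u - v‖ :=
  calc ‖(φ 1 - u - l • G u) - (ψ 1 - v - l • G v)‖
      = ‖(φ 1 - ψ 1) - (u - v) - l • (G u - G v)‖ := by rw [smul_sub]; congr 1; abel
    _ ≤ ‖φ 1 - ψ 1‖ + ‖u - v‖ + ‖l • (G u - G v)‖ :=
        norm_sub_le_of_le (norm_sub_le _ _) le_rfl
    _ ≤ Real.exp K * ‖u - v‖ + ‖u - v‖ + K * ‖u - v‖ := by
        gcongr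
        · exact hφ.norm_apply_one_sub_le hG hl hψ
        · rw [norm_smul, Real.norm_eq_abs]
          exact (mul_le_of_le_one_left (norm_nonneg _) hl).trans (hG.norm_sub_le _ _)
    _ = (Real.exp K + 1 + K) * ‖u - v‖ := by ring

theorem norm_sub_smul_le [CompleteSpace E] {K : ℝ≥0} (hG : LipschitzWith K G) (hl : |l| ≤ 1)
    (hφ : SolvesIntegralEq G l 0 φ) : ‖φ 1 - 0 - l • G 0‖ ≤ (Real.exp K + 1) * ‖G 0‖ :=
  calc ‖φ 1 - 0 - l • G 0‖ ≤ ‖φ 1‖ + ‖l • G 0‖ := by rw [sub_zero]; exact norm_sub_le _ _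
    _ ≤ Real.exp K * ‖G 0‖ + ‖G 0‖ := by
        gcongr
        · simpa using hφ.norm_apply_one_le hG hl
        · rw [norm_smul, Real.norm_eq_abs]
          exact mul_le_of_le_one_left (norm_nonneg _) hl
    _ = (Real.exp K + 1) * ‖G 0‖ := by ring

end SolvesIntegralEq

end IntegralEquation

section ParametricIntegral

variable {α E F : Type*} [MeasurableSpace α] {ν : Measure α} [NormedAddCommGroup E]
  [NormedAddCommGroup F] {H : α → E → F} {L c : ℝ}

theorem ae_norm_le_mul_one_add_norm (hL : 0 ≤ L) (hc : 0 ≤ c)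
    (hlip : ∀ᵐ a ∂ν, ∀ u v, ‖H a u - H a v‖ ≤ L * ‖u - v‖) (hzero : ∀ᵐ a ∂ν, ‖H a 0‖ ≤ c)
    (v : E) : ∀ᵐ a ∂ν, ‖H a v‖ ≤ (L + c) * (1 + ‖v‖) := by
  filter_upwards [hlip, hzero] with a ha ha0
  have := ha v 0
  rw [sub_zero] at this
  nlinarith [norm_le_norm_sub_add (H a v) (H a 0), norm_nonneg v]

theorem exists_norm_integral_sub_le_and_norm_integral_le [IsFiniteMeasure ν] [NormedSpace ℝ F]
    (hL : 0 ≤ L) (hc : 0 ≤ c) (hmeas : ∀ v, AEStronglyMeasurable (H · v) ν)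
    (hlip : ∀ᵐ a ∂ν, ∀ u v, ‖H a u - H a v‖ ≤ L * ‖u - v‖) (hzero : ∀ᵐ a ∂ν, ‖H a 0‖ ≤ c) :
    ∃ C, 0 < C ∧ ∀ u v, ‖∫ a, H a u ∂ν - ∫ a, H a v ∂ν‖ ≤ C * ‖u - v‖ ∧
      ‖∫ a, H a v ∂ν‖ ≤ C * (1 + ‖v‖) := by
  have hgrowth := ae_norm_le_mul_one_add_norm hL hc hlip hzero
  have hν : 0 ≤ ν.real univ := measureReal_nonneg
  refine ⟨ν.real univ * (L + c) + 1, by positivity, fun u v => ⟨?_, ?_⟩⟩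
  · rw [← integral_sub (.of_bound (hmeas u) _ (hgrowth u)) (.of_bound (hmeas v) _ (hgrowth v))]
    have := norm_integral_le_of_norm_le_const (hlip.mono fun a ha => ha u v)
    nlinarith [norm_nonneg (u - v), mul_nonneg hν hc]
  · have := norm_integral_le_of_norm_le_const (hgrowth v)
    nlinarith [norm_nonneg v]

end ParametricIntegral

theorem marcus_b_lipschitz_linear_growth_general
    {𝒪 : Type*} [MeasurableSpace 𝒪] (μ : Measure 𝒪)
    (h : 𝒪 → EuclideanSpace ℝ (Fin 3)) (hbdd : MemLp h ⊤ μ)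
    (gbar : Lp (EuclideanSpace ℝ (Fin 3)) 2 μ → Lp (EuclideanSpace ℝ (Fin 3)) 2 μ)
    (hgbar : ∀ v, ∀ᵐ x ∂μ, gbar v x = cross3 (v x) (h x) + h x)
    (ν : Measure ℝ) [IsFiniteMeasure ν] (hνB : ∀ᵐ l ∂ν, 0 < |l| ∧ |l| < 1)
    (Φ : ℝ → ℝ → Lp (EuclideanSpace ℝ (Fin 3)) 2 μ → Lp (EuclideanSpace ℝ (Fin 3)) 2 μ)
    (hΦc : ∀ (l : ℝ), 0 < |l| → |l| < 1 →
      ∀ v, ContinuousOn (fun t => Φ t l v) (Set.Icc 0 1))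
    (hΦeq : ∀ (l : ℝ), 0 < |l| → |l| < 1 →
      ∀ v, ∀ t ∈ Set.Icc (0:ℝ) 1, Φ t l v = v + l • ∫ s in (0:ℝ)..t, gbar (Φ s l v))
    (hΦmeas : ∀ v, AEStronglyMeasurable (fun l => Φ 1 l v) ν) :
    ∃ C : ℝ, 0 < C ∧
      ∀ u v : Lp (EuclideanSpace ℝ (Fin 3)) 2 μ,
        ‖(∫ l, (Φ 1 l u - u - l • gbar u) ∂ν) - ∫ l, (Φ 1 l v - v - l • gbar v) ∂ν‖
            ≤ C * ‖u - v‖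
        ∧ ‖∫ l, (Φ 1 l v - v - l • gbar v) ∂ν‖ ≤ C * (1 + ‖v‖) := by
  obtain ⟨K, hK⟩ : ∃ K, LipschitzWith K gbar := ⟨_, Lp.lipschitzWith_of_ae_lipschitzWith
    (hbdd.ae_nnnorm_le_toNNReal.mono fun x hx => (lipschitzWith_cross3_add (h x)).weaken hx)
    hgbar⟩
  have hsol : ∀ l, 0 < |l| → |l| < 1 → ∀ v, SolvesIntegralEq gbar l v (fun t => Φ t l v) :=
    fun l hl₀ hl₁ v => ⟨hΦc l hl₀ hl₁ v, hΦeq l hl₀ hl₁ v⟩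
  refine exists_norm_integral_sub_le_and_norm_integral_le
    (H := fun l v => Φ 1 l v - v - l • gbar v) (L := Real.exp K + 1 + K)
    (c := (Real.exp K + 1) * ‖gbar 0‖) (by positivity) (by positivity)
    (fun v => ((hΦmeas v).sub aestronglyMeasurable_const).sub (by fun_prop)) ?_ ?_
  · filter_upwards [hνB] with l ⟨hl₀, hl₁⟩ u v
    exact ((hsol l hl₀ hl₁ u).norm_sub_sub_smul_sub_le hK hl₁.le (hsol l hl₀ hl₁ v) :)
  · filter_upwards [hνB] with l ⟨hl₀, hl₁⟩
    exact ((hsol l hl₀ hl₁ 0).norm_sub_smul_le hK hl₁.le :)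

/-- Lipschitz continuity and linear growth of
`b(v) = ∫_B H(l,v) ν(dl)` with `H(l,v) = Φ(1,l,v) − v − l ḡ(v)`,
for a finite measure `ν` concentrated on `B = {0 < |l| < 1}`. -/
theorem marcus_b_lipschitz_linear_growth
    {𝒪 : Type*} [MeasurableSpace 𝒪] (μ : Measure 𝒪) [IsFiniteMeasure μ]
    (h : 𝒪 → EuclideanSpace ℝ (Fin 3)) (hmeas : Measurable h) (hbdd : MemLp h ⊤ μ)
    (gbar : Lp (EuclideanSpace ℝ (Fin 3)) 2 μ → Lp (EuclideanSpace ℝ (Fin 3)) 2 μ)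
    (hgbar : ∀ v, ∀ᵐ x ∂μ, gbar v x = cross3 (v x) (h x) + h x)
    (ν : Measure ℝ) [IsFiniteMeasure ν] (hνB : ∀ᵐ l ∂ν, 0 < |l| ∧ |l| < 1)
    (Φ : ℝ → ℝ → Lp (EuclideanSpace ℝ (Fin 3)) 2 μ → Lp (EuclideanSpace ℝ (Fin 3)) 2 μ)
    (hΦc : ∀ (l : ℝ), 0 < |l| → |l| < 1 →
      ∀ v, ContinuousOn (fun t => Φ t l v) (Set.Icc 0 1))
    (hΦeq : ∀ (l : ℝ), 0 < |l| → |l| < 1 →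
      ∀ v, ∀ t ∈ Set.Icc (0:ℝ) 1, Φ t l v = v + l • ∫ s in (0:ℝ)..t, gbar (Φ s l v))
    (hΦmeas : ∀ v, AEStronglyMeasurable (fun l => Φ 1 l v) ν) :
    ∃ C : ℝ, 0 < C ∧
      ∀ u v : Lp (EuclideanSpace ℝ (Fin 3)) 2 μ,
        ‖(∫ l, (Φ 1 l u - u - l • gbar u) ∂ν) - ∫ l, (Φ 1 l v - v - l • gbar v) ∂ν‖
            ≤ C * ‖u - v‖
        ∧ ‖∫ l, (Φ 1 l v - v - l • gbar v) ∂ν‖ ≤ C * (1 + ‖v‖) :=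
  marcus_b_lipschitz_linear_growth_general μ h hbdd gbar hgbar ν hνB Φ hΦc hΦeq hΦmeas
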